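/- arXiv:1509.01431 — 2 statements merged into one kernel-verified Lean document; each statement's English description precedes it below -/
import Mathlib

section
/- Let P be the transition matrix of the pure-drift Markov chain on the graph consisting of k disjoint arcs of lengths L_1, ..., L_k (directed paths from a_i to b_i with all transition probabilities 1 along the arc, and from each b_i transitions with probability 1/k to each a_j). Then a complex number μ ≠ 0 is an eigenvalue of P if and only if the sum over i of μ^{-L_i} equals k. -/
/-!
Along an arc the eigen-equation `P v = μ v` forces `v(i, m) = μ ^ m · v(a_i)`, and at the endpoint
`b_i` it reads `μ ^ (L i) · v(a_i) = (1/k) ∑ⱼ v(a_j)`. Hence `v(a_i) = μ ^ (-L i) · S / k` with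
`S = ∑ⱼ v(a_j)`, which is nonzero for an eigenvector; summing over `i` gives `∑ᵢ μ ^ (-L i) = k`.
Conversely, when `∑ᵢ μ ^ (-L i) = k`, the vector `v(i, m) = μ ^ (m - L i)` is an eigenvector.
-/

/-- The pure-drift transition matrix on `k` disjoint arcs of lengths `L i`.
Node `⟨i, j⟩` is the `j`-th node of arc `i`; `a_i = ⟨i, 0⟩` and
`b_i = ⟨i, L i - 1⟩`. From a non-terminal node there is a transition of
probability `1` to its successor on the arc, and from each `b_i` transitions
of probability `1/k` to every `a_j`. -/
noncomputable def pureDriftMatrix (k : ℕ) (L : Fin k → ℕ) :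
    Matrix ((i : Fin k) × Fin (L i)) ((i : Fin k) × Fin (L i)) ℂ :=
  fun p q =>
    if p.2.val + 1 < L p.1 then
      (if q.1 = p.1 ∧ q.2.val = p.2.val + 1 then 1 else 0)
    else
      (if q.2.val = 0 then (1 : ℂ) / k else 0)

open scoped Matrix
open Module.End

theorem Matrix.hasEigenvalue_toLin'_iff {n R : Type*} [Fintype n] [DecidableEq n] [CommRing R]
    (A : Matrix n n R) (μ : R) :
    HasEigenvalue (Matrix.toLin' A) μ ↔ ∃ v ≠ 0, A *ᵥ v = μ • v := by
  constructor
  · intro h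
    obtain ⟨v, hv, hv0⟩ := h.exists_hasEigenvector
    exact ⟨v, hv0, mem_eigenspace_iff.mp hv⟩
  · rintro ⟨v, hv0, hv⟩
    exact hasEigenvalue_of_hasEigenvector ⟨mem_eigenspace_iff.mpr hv, hv0⟩

section

variable {k : ℕ} {L : Fin k → ℕ}

theorem pureDriftMatrix_mulVec_of_lt (v : ((i : Fin k) × Fin (L i)) → ℂ)
    {p : (i : Fin k) × Fin (L i)} (hp : p.2.val + 1 < L p.1) :
    (pureDriftMatrix k L *ᵥ v) p = v ⟨p.1, ⟨p.2.val + 1, hp⟩⟩ := by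
  rw [Matrix.mulVec, dotProduct, Fintype.sum_eq_single ⟨p.1, ⟨p.2.val + 1, hp⟩⟩]
  · simp [pureDriftMatrix, hp]
  · rintro ⟨i, j⟩ hq
    have hsucc : ¬ (i = p.1 ∧ j.val = p.2.val + 1) := by
      rintro ⟨rfl, hj⟩
      exact hq (congrArg _ (Fin.ext hj))
    simp [pureDriftMatrix, hp, hsucc]

theorem pureDriftMatrix_mulVec_of_not_lt (hL : ∀ i, 1 ≤ L i) (v : ((i : Fin k) × Fin (L i)) → ℂ)
    {p : (i : Fin k) × Fin (L i)} (hp : ¬ p.2.val + 1 < L p.1) :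
    (pureDriftMatrix k L *ᵥ v) p = (k : ℂ)⁻¹ * ∑ i, v ⟨i, ⟨0, hL i⟩⟩ := by
  rw [Matrix.mulVec, dotProduct, Finset.mul_sum, ← Finset.univ_sigma_univ, Finset.sum_sigma]
  refine Finset.sum_congr rfl fun i _ => ?_
  rw [Fintype.sum_eq_single ⟨0, hL i⟩]
  · simp [pureDriftMatrix, hp]
  · intro j hj
    simp [pureDriftMatrix, hp, Fin.ext_iff.not.mp hj]

section

variable {μ : ℂ} {v : ((i : Fin k) × Fin (L i)) → ℂ}

theorem pureDriftMatrix_eigenvector_apply (hv : pureDriftMatrix k L *ᵥ v = μ • v)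
    (i : Fin k) (m : ℕ) (hm : m < L i) :
    v ⟨i, ⟨m, hm⟩⟩ = μ ^ m * v ⟨i, ⟨0, Nat.zero_lt_of_lt hm⟩⟩ := by
  induction m with
  | zero => simp
  | succ m ih =>
    have hstep := congrFun hv ⟨i, ⟨m, by omega⟩⟩
    rw [pureDriftMatrix_mulVec_of_lt v hm, Pi.smul_apply, smul_eq_mul] at hstep
    rw [hstep, ih, pow_succ, mul_assoc, mul_left_comm]

theorem pureDriftMatrix_eigenvector_pow_mul_apply_zero (hL : ∀ i, 1 ≤ L i)
    (hv : pureDriftMatrix k L *ᵥ v = μ • v) (i : Fin k) :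
    μ ^ L i * v ⟨i, ⟨0, hL i⟩⟩ = (k : ℂ)⁻¹ * ∑ j, v ⟨j, ⟨0, hL j⟩⟩ := by
  have hlast : L i - 1 < L i := by have := hL i; omega
  have hend := congrFun hv ⟨i, ⟨L i - 1, hlast⟩⟩
  rw [pureDriftMatrix_mulVec_of_not_lt hL v (by dsimp only; omega), Pi.smul_apply, smul_eq_mul,
    pureDriftMatrix_eigenvector_apply hv, ← mul_assoc, ← pow_succ', Nat.sub_add_cancel (hL i)]
    at hend
  exact hend.symm

theorem sum_zpow_neg_eq_of_pureDriftMatrix_mulVec_eq_smul (hk : k ≠ 0) (hL : ∀ i, 1 ≤ L i)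
    (hμ : μ ≠ 0) (hv0 : v ≠ 0) (hv : pureDriftMatrix k L *ᵥ v = μ • v) :
    ∑ i, μ ^ (-(L i : ℤ)) = k := by
  set S := ∑ j, v ⟨j, ⟨0, hL j⟩⟩
  have hstart : ∀ i, v ⟨i, ⟨0, hL i⟩⟩ = μ ^ (-(L i : ℤ)) * ((k : ℂ)⁻¹ * S) := fun i => by
    rw [zpow_neg, zpow_natCast, ← pureDriftMatrix_eigenvector_pow_mul_apply_zero hL hv,
      inv_mul_cancel_left₀ (pow_ne_zero _ hμ)]
  have hS : S ≠ 0 := by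
    intro hS
    refine hv0 (funext fun ⟨i, m⟩ => ?_)
    rw [pureDriftMatrix_eigenvector_apply hv, hstart, hS]
    simp
  have hsum : S = (∑ i, μ ^ (-(L i : ℤ))) * ((k : ℂ)⁻¹ * S) := by
    rw [Finset.sum_mul]
    exact Finset.sum_congr rfl fun i _ => hstart i
  have hk' : (k : ℂ) ≠ 0 := Nat.cast_ne_zero.mpr hk
  field_simp at hsum
  exact hsum.symm

end

/-- Normalized so that `μ · v(b_i) = 1` on every arc. -/
noncomputable def driftEigenvector (L : Fin k → ℕ) (μ : ℂ) : ((i : Fin k) × Fin (L i)) → ℂ :=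
  fun p => μ ^ ((p.2.val : ℤ) - L p.1)

theorem driftEigenvector_ne_zero {μ : ℂ} (hμ : μ ≠ 0) (i : Fin k) (hi : 0 < L i) :
    driftEigenvector L μ ≠ 0 :=
  fun h => zpow_ne_zero _ hμ (congrFun h ⟨i, ⟨0, hi⟩⟩)

theorem pureDriftMatrix_mulVec_driftEigenvector (hL : ∀ i, 1 ≤ L i) {μ : ℂ} (hμ : μ ≠ 0)
    (hsum : ∑ i, μ ^ (-(L i : ℤ)) = k) :
    pureDriftMatrix k L *ᵥ driftEigenvector L μ = μ • driftEigenvector L μ := by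
  funext p
  have hshift : μ * driftEigenvector L μ p = μ ^ ((p.2.val + 1 : ℤ) - L p.1) := by
    rw [driftEigenvector, ← zpow_one_add₀ hμ]
    ring_nf
  rw [Pi.smul_apply, smul_eq_mul, hshift]
  by_cases hp : p.2.val + 1 < L p.1
  · rw [pureDriftMatrix_mulVec_of_lt _ hp, driftEigenvector]
    push_cast
    rfl
  · have hlast : (p.2.val + 1 : ℤ) = L p.1 := by have := p.2.isLt; omega
    rw [pureDriftMatrix_mulVec_of_not_lt hL _ hp, hlast, sub_self, zpow_zero]
    simp only [driftEigenvector, Nat.cast_zero, zero_sub, hsum]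
    exact inv_mul_cancel₀ (Nat.cast_ne_zero.mpr p.1.pos.ne')

end

/-- `μ ≠ 0` is an eigenvalue of the pure-drift chain iff `∑ i, μ^{-L_i} = k`. -/
theorem stmt_5 (k : ℕ) (hk : 1 ≤ k) (L : Fin k → ℕ) (hL : ∀ i, 1 ≤ L i)
    (μ : ℂ) (hμ : μ ≠ 0) :
    Module.End.HasEigenvalue (Matrix.toLin' (pureDriftMatrix k L)) μ ↔
      ∑ i, μ ^ (-(L i : ℤ)) = (k : ℂ) := by
  rw [Matrix.hasEigenvalue_toLin'_iff]
  constructor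
  · rintro ⟨v, hv0, hv⟩
    exact sum_zpow_neg_eq_of_pureDriftMatrix_mulVec_eq_smul (by omega) hL hμ hv0 hv
  · intro hsum
    exact ⟨_, driftEigenvector_ne_zero hμ ⟨0, hk⟩ (hL _),
      pureDriftMatrix_mulVec_driftEigenvector hL hμ hsum⟩
end

section
/- Let Y be a binomial random variable with N trials and success probability r ≤ 1/3. Then P(Y > N/2) ≤ (8/9)^{N/2}. -/
/-- Chernoff-type bound: for `Y ~ Binomial(N, r)` with `r ≤ 1/3`,
`P(Y > N/2) ≤ (8/9)^{N/2}`. -/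
theorem stmt_13 (N : ℕ) (r : ℝ) (hr0 : 0 ≤ r) (hr : r ≤ 1 / 3) :
    ∑ j ∈ (Finset.range (N + 1)).filter (fun j : ℕ => (N : ℝ) / 2 < (j : ℝ)),
        (N.choose j : ℝ) * r ^ j * (1 - r) ^ (N - j)
      ≤ (8 / 9 : ℝ) ^ ((N : ℝ) / 2) := by
  have h1r : (0:ℝ) ≤ 1 - r := by linarith
  have h2r : (0:ℝ) ≤ 2 * r := by linarith
  set g : ℕ → ℝ := fun j => (N.choose j : ℝ) * (2*r) ^ j * (1 - r) ^ (N - j) with hg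
  have hgnn : ∀ j, 0 ≤ g j := fun j => by
    apply mul_nonneg (mul_nonneg (by positivity) (pow_nonneg h2r _)) (pow_nonneg h1r _)
  have hc : (0:ℝ) ≤ (1/2 : ℝ) ^ ((N:ℝ)/2) := Real.rpow_nonneg (by norm_num) _
  have step1 : ∑ j ∈ (Finset.range (N + 1)).filter (fun j : ℕ => (N : ℝ) / 2 < (j : ℝ)),
        (N.choose j : ℝ) * r ^ j * (1 - r) ^ (N - j)
      ≤ ∑ j ∈ (Finset.range (N + 1)).filter (fun j : ℕ => (N : ℝ) / 2 < (j : ℝ)),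
        (1/2 : ℝ) ^ ((N:ℝ)/2) * g j := by
    apply Finset.sum_le_sum
    intro j hj
    simp only [Finset.mem_filter, Finset.mem_range] at hj
    have hhalf : ((1:ℝ)/2) ^ ((j:ℝ)) ≤ ((1:ℝ)/2) ^ ((N:ℝ)/2) :=
      Real.rpow_le_rpow_of_exponent_ge (by norm_num) (by norm_num) (le_of_lt hj.2)
    have hr_eq : r ^ j = (1/2:ℝ)^((j:ℝ)) * (2*r)^j := by
      rw [Real.rpow_natCast, ← mul_pow, show (1/2 * (2*r) : ℝ) = r by ring]
    calc (N.choose j : ℝ) * r ^ j * (1 - r) ^ (N - j)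
        = (1/2:ℝ)^((j:ℝ)) * g j := by rw [hr_eq, hg]; ring
      _ ≤ (1/2 : ℝ) ^ ((N:ℝ)/2) * g j := mul_le_mul_of_nonneg_right hhalf (hgnn j)
  have step2 : ∑ j ∈ (Finset.range (N + 1)).filter (fun j : ℕ => (N : ℝ) / 2 < (j : ℝ)),
        (1/2 : ℝ) ^ ((N:ℝ)/2) * g j
      ≤ (1/2 : ℝ) ^ ((N:ℝ)/2) * ∑ j ∈ Finset.range (N + 1), g j := by
    rw [← Finset.mul_sum]
    apply mul_le_mul_of_nonneg_left _ hc
    apply Finset.sum_le_sum_of_subset_of_nonneg (Finset.filter_subset _ _)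
    intro j _ _; exact hgnn j
  have hbinom : ∑ j ∈ Finset.range (N + 1), g j = (1 + r) ^ N := by
    have := add_pow (2*r) (1-r) N
    rw [show (2*r + (1-r)) = 1 + r by ring] at this
    rw [this]
    apply Finset.sum_congr rfl
    intro j _; rw [hg]; ring
  have hpow : (1 + r) ^ N ≤ (4/3 : ℝ) ^ N := by
    apply pow_le_pow_left₀ (by linarith) (by linarith)
  have hfinal : (1/2 : ℝ) ^ ((N:ℝ)/2) * (4/3 : ℝ) ^ N = (8/9 : ℝ) ^ ((N:ℝ)/2) := by
    have h43 : (4/3 : ℝ) ^ N = ((16:ℝ)/9) ^ ((N:ℝ)/2) := by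
      rw [show ((16:ℝ)/9) = ((4:ℝ)/3) ^ (2:ℝ) by
        rw [show (2:ℝ) = ((2:ℕ):ℝ) by norm_num, Real.rpow_natCast]; norm_num]
      rw [← Real.rpow_natCast (4/3 : ℝ) N, ← Real.rpow_mul (by norm_num)]
      ring_nf
    rw [h43, ← Real.mul_rpow (by norm_num) (by norm_num)]
    norm_num
  calc ∑ j ∈ (Finset.range (N + 1)).filter (fun j : ℕ => (N : ℝ) / 2 < (j : ℝ)),
        (N.choose j : ℝ) * r ^ j * (1 - r) ^ (N - j)
      ≤ (1/2 : ℝ) ^ ((N:ℝ)/2) * ∑ j ∈ Finset.range (N + 1), g j := le_trans step1 step2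
    _ = (1/2 : ℝ) ^ ((N:ℝ)/2) * (1 + r) ^ N := by rw [hbinom]
    _ ≤ (1/2 : ℝ) ^ ((N:ℝ)/2) * (4/3 : ℝ) ^ N := mul_le_mul_of_nonneg_left hpow hc
    _ = (8/9 : ℝ) ^ ((N:ℝ)/2) := hfinal
end
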